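/- arXiv:1802.03786 — 3 statements merged into one kernel-verified Lean document; each statement's English description precedes it below -/
import Mathlib

section
/- The following conditions are equivalent for a ring R: (1) every non-zero right ideal of R has a serial factorization; (2) the principal right ideal rR has a serial factorization for every non-zero element r ∈ R. -/
/-!
Take `0 ≠ a ∈ B` and a serial factorization `aR = A₁⋯Aₙ`. Pairwise commuting coindependent right
ideals multiply to their intersection, so `⋂ Aᵢ = aR ⊆ B`, and the right ideals `B + Aᵢ` (those
different from `R`) inherit coindependence and uniserial quotients. When `n ≥ 2`, every `Aᵢ` is
two-sided and a Chinese remainder argument gives `B = ⋂ (B + Aᵢ)`. Applying the hypothesis to the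
component in `⋂_{j ≠ i} Aⱼ` of an element of `B` shows that `B` is two-sided, and this is what
makes the `B + Aᵢ` commute, so that `B = ∏ (B + Aᵢ)` is a serial factorization.
-/

open MulOpposite

universe u

/-- The product `A·B` of two right ideals of `R` (right ideals are `Rᵐᵒᵖ`-submodules of `R`):
the set of all finite sums of products `a * b` with `a ∈ A`, `b ∈ B`. -/
def rmul {R : Type u} [Ring R] (A B : Submodule Rᵐᵒᵖ R) : Submodule Rᵐᵒᵖ R :=
  Submodule.span Rᵐᵒᵖ {x : R | ∃ a ∈ A, ∃ b ∈ B, x = a * b}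

/-- The product `A₁⋯Aₙ` of a (possibly empty) list of right ideals. -/
def rprod {R : Type u} [Ring R] : List (Submodule Rᵐᵒᵖ R) → Submodule Rᵐᵒᵖ R
  | [] => ⊤
  | [A] => A
  | A :: l => rmul A (rprod l)

/-- A finite family of right ideals is coindependent if `Aᵢ + ⋂_{j ≠ i} Aⱼ = R` for every `i`. -/
def Coindep {R : Type u} [Ring R] {n : ℕ} (A : Fin n → Submodule Rᵐᵒᵖ R) : Prop :=
  ∀ i, A i ⊔ (⨅ j, ⨅ (_ : j ≠ i), A j) = ⊤

/-- A module is uniserial if its submodules are linearly ordered by inclusion. -/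
def IsUniserialMod (S : Type*) [Ring S] (M : Type*) [AddCommGroup M] [Module S M] : Prop :=
  ∀ N P : Submodule S M, N ≤ P ∨ P ≤ N

/-- A right ideal is a two-sided ideal if it is also closed under left multiplication. -/
def IsTwoSidedRid {R : Type u} [Ring R] (A : Submodule Rᵐᵒᵖ R) : Prop :=
  ∀ (r : R), ∀ x ∈ A, r * x ∈ A

/-- A serial factorization of a right ideal `A`: a factorization `A = A₁⋯Aₙ` into proper
right ideals that pairwise commute, form a coindependent family, and are such that every
quotient `R/Aᵢ` is a uniserial right `R`-module. -/
def IsSerialFact {R : Type u} [Ring R] {n : ℕ} (A : Submodule Rᵐᵒᵖ R)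
    (F : Fin n → Submodule Rᵐᵒᵖ R) : Prop :=
  (∀ i, F i ≠ ⊤) ∧ (∀ i j, rmul (F i) (F j) = rmul (F j) (F i)) ∧ Coindep F ∧
    (∀ i, IsUniserialMod Rᵐᵒᵖ (R ⧸ F i)) ∧ A = rprod (List.ofFn F)

/-- A right ideal has a serial factorization if it admits one of some length. -/
def HasSerialFact {R : Type u} [Ring R] (A : Submodule Rᵐᵒᵖ R) : Prop :=
  ∃ (n : ℕ) (F : Fin n → Submodule Rᵐᵒᵖ R), IsSerialFact A F

/-- A right chain ring: its right ideals are linearly ordered by inclusion. -/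
def IsRightChainRing (R : Type u) [Ring R] : Prop :=
  ∀ A B : Submodule Rᵐᵒᵖ R, A ≤ B ∨ B ≤ A

/-- A ring is right duo if every right ideal is a two-sided ideal. -/
def IsRightDuo (R : Type u) [Ring R] : Prop :=
  ∀ A : Submodule Rᵐᵒᵖ R, IsTwoSidedRid A

/-- The principal right ideal `rR`. -/
def rspan {R : Type u} [Ring R] (r : R) : Submodule Rᵐᵒᵖ R :=
  Submodule.span Rᵐᵒᵖ ({r} : Set R)

section Products

variable {R : Type u} [Ring R]

lemma mul_mem_right_of_mem {A : Submodule Rᵐᵒᵖ R} {x : R} (h : x ∈ A) (r : R) : x * r ∈ A := by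
  simpa [op_smul_eq_mul] using A.smul_mem (op r) h

lemma mem_rmul {A B : Submodule Rᵐᵒᵖ R} {a b : R} (ha : a ∈ A) (hb : b ∈ B) :
    a * b ∈ rmul A B :=
  Submodule.subset_span ⟨a, ha, b, hb, rfl⟩

lemma rmul_le {A B C : Submodule Rᵐᵒᵖ R} (h : ∀ a ∈ A, ∀ b ∈ B, a * b ∈ C) :
    rmul A B ≤ C := by
  rw [rmul, Submodule.span_le]
  rintro x ⟨a, ha, b, hb, rfl⟩
  exact h a ha b hb

/-- Since `B` is a right ideal, `(a * b) * r = a * (b * r)` is again a product, so `rmul A B` is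
already the additive span of the products. -/
lemma rmul_induction {A B : Submodule Rᵐᵒᵖ R} {p : R → Prop} {x : R} (hx : x ∈ rmul A B)
    (mul : ∀ a ∈ A, ∀ b ∈ B, p (a * b)) (zero : p 0) (add : ∀ x y, p x → p y → p (x + y)) :
    p x := by
  suffices ∀ r, p (x * r) by simpa using this 1
  induction hx using Submodule.span_induction with
  | mem y hy =>
    obtain ⟨a, ha, b, hb, rfl⟩ := hy
    exact fun r => mul_assoc a b r ▸ mul a ha _ (mul_mem_right_of_mem hb r)
  | zero => simpa using zero
  | add y z _ _ hy hz => exact fun r => (add_mul y z r).symm ▸ add _ _ (hy r) (hz r)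
  | smul s y _ hy =>
    intro r
    rw [← op_unop s, op_smul_eq_mul, mul_assoc]
    exact hy _

lemma rmul_le_left {A B : Submodule Rᵐᵒᵖ R} : rmul A B ≤ A :=
  rmul_le fun _ ha b _ => mul_mem_right_of_mem ha b

lemma rmul_mono {A B A' B' : Submodule Rᵐᵒᵖ R} (hA : A ≤ A') (hB : B ≤ B') :
    rmul A B ≤ rmul A' B' :=
  rmul_le fun _ ha _ hb => mem_rmul (hA ha) (hB hb)

lemma rmul_top (A : Submodule Rᵐᵒᵖ R) : rmul A ⊤ = A :=
  le_antisymm rmul_le_left fun a ha => by simpa using mem_rmul ha (Submodule.mem_top (x := 1))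

lemma rmul_assoc (A B C : Submodule Rᵐᵒᵖ R) :
    rmul (rmul A B) C = rmul A (rmul B C) := by
  apply le_antisymm
  · refine rmul_le fun y hy c hc => ?_
    refine rmul_induction (p := fun y => y * c ∈ rmul A (rmul B C)) hy ?_ (by simp) ?_
    · exact fun a ha b hb => (mul_assoc a b c).symm ▸ mem_rmul ha (mem_rmul hb hc)
    · exact fun x y hx hy => (add_mul x y c).symm ▸ add_mem hx hy
  · refine rmul_le fun a ha z hz => ?_
    refine rmul_induction (p := fun z => a * z ∈ rmul (rmul A B) C) hz ?_ (by simp) ?_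
    · exact fun b hb c hc => mul_assoc a b c ▸ mem_rmul (mem_rmul ha hb) hc
    · exact fun x y hx hy => (mul_add a x y).symm ▸ add_mem hx hy

lemma rmul_eq_inf {A B : Submodule Rᵐᵒᵖ R} (hsup : A ⊔ B = ⊤)
    (hcomm : rmul A B = rmul B A) : rmul A B = A ⊓ B := by
  refine le_antisymm (le_inf rmul_le_left (hcomm ▸ rmul_le_left)) fun z hz => ?_
  obtain ⟨u, hu, v, hv, huv⟩ := Submodule.mem_sup.mp (hsup ▸ Submodule.mem_top (x := (1 : R)))
  have hz_split : z = z * u + z * v := by rw [← mul_add, huv, mul_one]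
  rw [hz_split]
  exact add_mem (hcomm ▸ mem_rmul hz.2 hu) (mem_rmul hz.1 hv)

lemma isTwoSidedRid_of_sup_eq_top {A A' : Submodule Rᵐᵒᵖ R} (hsup : A ⊔ A' = ⊤)
    (hcomm : rmul A A' = rmul A' A) : IsTwoSidedRid A := by
  intro r x hx
  obtain ⟨s, hs, t, ht, rfl⟩ := Submodule.mem_sup.mp (hsup ▸ Submodule.mem_top (x := r))
  rw [add_mul]
  exact add_mem (mul_mem_right_of_mem hs x) (rmul_le_left (hcomm ▸ mem_rmul ht hx))

end Products

section Coindependence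

variable {R : Type u} [Ring R] {n : ℕ} {A : Fin n → Submodule Rᵐᵒᵖ R}

lemma Coindep.sup_eq_top (hco : Coindep A) {i j : Fin n} (hij : i ≠ j) : A i ⊔ A j = ⊤ :=
  top_le_iff.mp ((hco i).symm.le.trans (sup_le_sup_left (iInf₂_le j hij.symm) _))

lemma Coindep.mono (hco : Coindep A) {G : Fin n → Submodule Rᵐᵒᵖ R} (h : ∀ i, A i ≤ G i) :
    Coindep G := fun i =>
  top_le_iff.mp ((hco i).symm.le.trans
    (sup_le_sup (h i) (iInf_mono fun j => iInf_mono fun _ => h j)))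

lemma Coindep.comp_injective (hco : Coindep A) {m : ℕ} {f : Fin m → Fin n}
    (hf : Function.Injective f) : Coindep (A ∘ f) := by
  intro k
  refine top_le_iff.mp ((hco (f k)).symm.le.trans (sup_le_sup_left ?_ _))
  refine le_iInf₂ fun l hl => ?_
  exact (iInf_le _ (f l)).trans (iInf_le _ (hf.ne hl))

lemma Coindep.exists_complements (hco : Coindep A) :
    ∃ e : Fin n → R, ∀ i, 1 - e i ∈ A i ∧ ∀ j ≠ i, e i ∈ A j := by
  have h i : ∃ u ∈ A i, ∃ v ∈ ⨅ j, ⨅ (_ : j ≠ i), A j, u + v = 1 :=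
    Submodule.mem_sup.mp ((hco i).symm ▸ Submodule.mem_top)
  choose u hu e he hue using h
  refine ⟨e, fun i => ⟨?_, fun j hj => ?_⟩⟩
  · rw [← hue i, add_sub_cancel_right]
    exact hu i
  · exact (Submodule.mem_iInf _).mp ((Submodule.mem_iInf _).mp (he i) j) hj

end Coindependence

section Factorizations

variable {R : Type u} [Ring R]

lemma rprod_cons (X : Submodule Rᵐᵒᵖ R) (l : List (Submodule Rᵐᵒᵖ R)) :
    rprod (X :: l) = rmul X (rprod l) := by
  cases l with
  | nil => exact (rmul_top X).symm
  | cons Y t => rfl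

lemma rmul_rprod_comm {X : Submodule Rᵐᵒᵖ R} :
    ∀ {l : List (Submodule Rᵐᵒᵖ R)}, l ≠ [] → (∀ Y ∈ l, rmul X Y = rmul Y X) →
      rmul X (rprod l) = rmul (rprod l) X
  | [], hl, _ => absurd rfl hl
  | [Y], _, h => h Y (by simp)
  | Y :: Z :: t, _, h => by
    have ih := rmul_rprod_comm (l := Z :: t) (by simp) fun W hW => h W (by simp [hW])
    rw [rprod_cons, ← rmul_assoc, h Y (by simp), rmul_assoc, ih, ← rmul_assoc]

lemma rprod_ofFn_eq_iInf : ∀ {n : ℕ} {F : Fin n → Submodule Rᵐᵒᵖ R},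
    (∀ i j, rmul (F i) (F j) = rmul (F j) (F i)) → Coindep F →
      rprod (List.ofFn F) = ⨅ i, F i
  | 0, _, _, _ => (iInf_of_empty _).symm
  | 1, F, _, _ => by simp [rprod]
  | n + 2, F, hcomm, hco => by
    set T : Fin (n + 1) → Submodule Rᵐᵒᵖ R := fun i => F i.succ
    have ih : rprod (List.ofFn T) = ⨅ i, T i :=
      rprod_ofFn_eq_iInf (fun i j => hcomm _ _) (hco.comp_injective (Fin.succ_injective _))
    have hc : rmul (F 0) (rprod (List.ofFn T)) = rmul (rprod (List.ofFn T)) (F 0) :=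
      rmul_rprod_comm (by simp) fun Y hY => by
        obtain ⟨i, rfl⟩ := List.mem_ofFn.mp hY
        exact hcomm 0 i.succ
    have hsup : F 0 ⊔ rprod (List.ofFn T) = ⊤ := ih ▸ top_le_iff.mp ((hco 0).symm.le.trans
      (sup_le_sup_left (le_iInf fun i : Fin (n + 1) => iInf₂_le i.succ (Fin.succ_ne_zero i)) _))
    rw [List.ofFn_succ, rprod_cons, rmul_eq_inf hsup hc, ih]
    ext x
    simp [T, Submodule.mem_iInf, Fin.forall_fin_succ]

end Factorizations

section Uniserial

variable {R : Type u} [Ring R]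

lemma isUniserialMod_quotient_iff (D : Submodule Rᵐᵒᵖ R) :
    IsUniserialMod Rᵐᵒᵖ (R ⧸ D) ↔
      ∀ X Y : Submodule Rᵐᵒᵖ R, D ≤ X → D ≤ Y → X ≤ Y ∨ Y ≤ X := by
  let e := Submodule.comapMkQRelIso D
  constructor
  · intro h X Y hX hY
    have hXY := h (e.symm ⟨X, hX⟩) (e.symm ⟨Y, hY⟩)
    rwa [e.symm.le_iff_le, e.symm.le_iff_le] at hXY
  · intro h N P
    rw [← e.le_iff_le, ← e.le_iff_le]
    exact h _ _ (e N).2 (e P).2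

lemma isUniserialMod_quotient_of_le {D E : Submodule Rᵐᵒᵖ R} (h : D ≤ E)
    (hD : IsUniserialMod Rᵐᵒᵖ (R ⧸ D)) : IsUniserialMod Rᵐᵒᵖ (R ⧸ E) :=
  (isUniserialMod_quotient_iff E).mpr fun X Y hX hY =>
    (isUniserialMod_quotient_iff D).mp hD X Y (h.trans hX) (h.trans hY)

/-- The members equal to `⊤` are dropped; they do not change the intersection. -/
lemma hasSerialFact_iInf {m : ℕ} {G : Fin m → Submodule Rᵐᵒᵖ R}
    (hcomm : ∀ i j, rmul (G i) (G j) = rmul (G j) (G i)) (hco : Coindep G)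
    (huni : ∀ i, IsUniserialMod Rᵐᵒᵖ (R ⧸ G i)) : HasSerialFact (⨅ i, G i) := by
  let e : Fin (Fintype.card {i // G i ≠ ⊤}) ≃ {i // G i ≠ ⊤} := (Fintype.equivFin _).symm
  let f := fun k => (e k).1
  have hco' : Coindep (G ∘ f) := hco.comp_injective (Subtype.val_injective.comp e.injective)
  have hcomm' : ∀ k l, rmul (G (f k)) (G (f l)) = rmul (G (f l)) (G (f k)) :=
    fun k l => hcomm _ _
  refine ⟨_, G ∘ f, fun k => (e k).2, hcomm', hco', fun k => huni _, ?_⟩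
  rw [rprod_ofFn_eq_iInf (F := G ∘ f) hcomm' hco']
  calc ⨅ i, G i = ⨅ i : {i // G i ≠ ⊤}, G i := (iInf_ne_top_subtype G).symm
    _ = ⨅ k, G (f k) := (e.iInf_comp (g := fun i => G i.1)).symm

end Uniserial

section TwoSided

lemma iInf_sup_le_of_subsingleton {α ι : Type*} [CompleteLattice α] [Subsingleton ι]
    {f : ι → α} {b : α} (h : ⨅ i, f i ≤ b) : ⨅ i, (b ⊔ f i) ≤ b := by
  rcases isEmpty_or_nonempty ι with hι | ⟨⟨i⟩⟩
  · rw [iInf_of_empty] at h ⊢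
    exact h
  · have hfi : f i ≤ ⨅ j, f j := le_iInf fun j => Subsingleton.elim i j ▸ le_rfl
    exact (iInf_le _ i).trans (sup_le le_rfl (hfi.trans h))

variable {R : Type u} [Ring R] {n : ℕ} {A : Fin n → Submodule Rᵐᵒᵖ R}

lemma Coindep.isTwoSidedRid [Nontrivial (Fin n)]
    (hcomm : ∀ i j, rmul (A i) (A j) = rmul (A j) (A i)) (hco : Coindep A) (i : Fin n) :
    IsTwoSidedRid (A i) := by
  obtain ⟨j, hj⟩ := exists_ne i
  exact isTwoSidedRid_of_sup_eq_top (hco.sup_eq_top hj.symm) (hcomm i j)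

lemma one_sub_sum_mem {e : Fin n → R} (he : ∀ i, 1 - e i ∈ A i ∧ ∀ j ≠ i, e i ∈ A j)
    (i : Fin n) : 1 - ∑ j, e j ∈ A i := by
  rw [← Finset.add_sum_erase _ _ (Finset.mem_univ i), ← sub_sub]
  exact sub_mem (he i).1
    (Submodule.sum_mem _ fun j hj => (he j).2 i (Finset.ne_of_mem_erase hj).symm)

/-- A Chinese remainder argument: `x = x * (1 - ∑ eⱼ) + ∑ x * eᵢ` with `eᵢ ∈ ⋂_{j ≠ i} Aⱼ` and
`1 - eᵢ ∈ Aᵢ`; the first summand lies in `⋂ Aⱼ ⊆ B`, and `x * eᵢ ∈ B eᵢ + Aᵢ eᵢ ⊆ B + ⋂ Aⱼ`. -/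
lemma iInf_sup_le_of_iInf_le (hts : ∀ i, IsTwoSidedRid (A i)) (hco : Coindep A)
    {B : Submodule Rᵐᵒᵖ R} (hB : ⨅ i, A i ≤ B) : ⨅ i, (B ⊔ A i) ≤ B := by
  intro x hx
  obtain ⟨e, he⟩ := hco.exists_complements
  have hxe : ∀ i, x * e i ∈ B := by
    intro i
    obtain ⟨b, hb, s, hs, rfl⟩ := Submodule.mem_sup.mp ((Submodule.mem_iInf _).mp hx i)
    rw [add_mul]
    refine add_mem (mul_mem_right_of_mem hb _) (hB ((Submodule.mem_iInf _).mpr fun j => ?_))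
    rcases eq_or_ne j i with rfl | hji
    · exact mul_mem_right_of_mem hs _
    · exact hts j s _ ((he i).2 j hji)
  have hrest : x * (1 - ∑ j, e j) ∈ B :=
    hB ((Submodule.mem_iInf _).mpr fun i => hts i x _ (one_sub_sum_mem he i))
  have hx_split : x = x * (1 - ∑ j, e j) + ∑ j, x * e j := by
    rw [mul_sub, mul_one, Finset.mul_sum, sub_add_cancel]
  rw [hx_split]
  exact add_mem hrest (Submodule.sum_mem _ fun j _ => hxe j)

/-- `x = u * (x * u) + v * (x * u) + x * v` for `x ∈ B`, where `1 = u + v`, `u ∈ A`, `v ∈ A'`. -/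
lemma rmul_sup_sup {A A' B : Submodule Rᵐᵒᵖ R} (hB : IsTwoSidedRid B) (hsup : A ⊔ A' = ⊤)
    (hcomm : rmul A A' = rmul A' A) : rmul (B ⊔ A) (B ⊔ A') = B ⊔ rmul A A' := by
  apply le_antisymm
  · refine rmul_le fun x hx y hy => ?_
    obtain ⟨b, hb, s, hs, rfl⟩ := Submodule.mem_sup.mp hx
    obtain ⟨b', hb', s', hs', rfl⟩ := Submodule.mem_sup.mp hy
    rw [add_mul, mul_add s]
    exact add_mem (Submodule.mem_sup_left (mul_mem_right_of_mem hb _))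
      (add_mem (Submodule.mem_sup_left (hB s b' hb')) (Submodule.mem_sup_right (mem_rmul hs hs')))
  · refine sup_le (fun x hx => ?_) (rmul_mono le_sup_right le_sup_right)
    obtain ⟨u, hu, v, hv, huv⟩ := Submodule.mem_sup.mp (hsup ▸ Submodule.mem_top (x := (1 : R)))
    have hxu : x * u ∈ A := isTwoSidedRid_of_sup_eq_top hsup hcomm x u hu
    have hx_split : x = u * (x * u) + v * (x * u) + x * v := by
      rw [← add_mul, huv, one_mul, ← mul_add, huv, mul_one]
    rw [hx_split]
    refine add_mem (add_mem ?_ ?_) ?_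
    · exact mem_rmul (Submodule.mem_sup_right hu)
        (Submodule.mem_sup_left (mul_mem_right_of_mem hx u))
    · exact rmul_mono le_sup_right le_sup_right (hcomm ▸ mem_rmul hv hxu)
    · exact mem_rmul (Submodule.mem_sup_left hx) (Submodule.mem_sup_right hv)

lemma Coindep.rmul_sup_comm {B : Submodule Rᵐᵒᵖ R} (hB : IsTwoSidedRid B)
    (hcomm : ∀ i j, rmul (A i) (A j) = rmul (A j) (A i)) (hco : Coindep A) (i j : Fin n) :
    rmul (B ⊔ A i) (B ⊔ A j) = rmul (B ⊔ A j) (B ⊔ A i) := by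
  rcases eq_or_ne i j with rfl | hij
  · rfl
  · rw [rmul_sup_sup hB (hco.sup_eq_top hij) (hcomm i j),
      rmul_sup_sup hB (hco.sup_eq_top hij.symm) (hcomm j i), hcomm i j]

end TwoSided

section PrincipalRightIdeals

variable {R : Type u} [Ring R]

lemma mem_rspan_self (r : R) : r ∈ rspan r := Submodule.mem_span_singleton_self r

lemma rspan_le_iff {r : R} {X : Submodule Rᵐᵒᵖ R} : rspan r ≤ X ↔ r ∈ X :=
  Submodule.span_singleton_le_iff_mem r X

lemma HasSerialFact.eq_top_or_uniserial_or_isTwoSidedRid {A : Submodule Rᵐᵒᵖ R}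
    (h : HasSerialFact A) :
    A = ⊤ ∨ IsUniserialMod Rᵐᵒᵖ (R ⧸ A) ∨ IsTwoSidedRid A := by
  obtain ⟨n, F, -, hcomm, hco, huni, rfl⟩ := h
  rw [rprod_ofFn_eq_iInf hcomm hco]
  match n, F, hcomm, hco, huni with
  | 0, _, _, _, _ => exact Or.inl (iInf_of_empty _)
  | 1, F, _, _, huni => exact Or.inr (Or.inl ((iInf_unique F).symm ▸ huni default))
  | n + 2, F, hcomm, hco, _ =>
    refine Or.inr (Or.inr fun r x hx => ?_)
    rw [Submodule.mem_iInf] at hx ⊢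
    exact fun i => hco.isTwoSidedRid hcomm i r x (hx i)

lemma rspan_eq_top_or_uniserial_or_isTwoSidedRid
    (hyp : ∀ r : R, r ≠ 0 → HasSerialFact (rspan r)) (c : R) :
    rspan c = ⊤ ∨ IsUniserialMod Rᵐᵒᵖ (R ⧸ rspan c) ∨ IsTwoSidedRid (rspan c) := by
  rcases eq_or_ne c 0 with rfl | hc
  · refine Or.inr (Or.inr fun r x hx => ?_)
    rw [rspan, Submodule.span_zero_singleton, Submodule.mem_bot] at hx ⊢
    rw [hx, mul_zero]
  · exact (hyp c hc).eq_top_or_uniserial_or_isTwoSidedRid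

/-- Write `b = t + c` with `t ∈ I`, `c ∈ J`. If `R / cR` is uniserial, then `I + cR` and `J` are
comparable, and `I + J = R` with `J ≠ R` forces `I + cR = R`. -/
lemma mul_mem_rspan_sup {I J : Submodule Rᵐᵒᵖ R} (hI : IsTwoSidedRid I) (hJ : J ≠ ⊤)
    (hIJ : I ⊔ J = ⊤)
    (htri : ∀ c : R,
      rspan c = ⊤ ∨ IsUniserialMod Rᵐᵒᵖ (R ⧸ rspan c) ∨ IsTwoSidedRid (rspan c))
    (r b : R) : r * b ∈ rspan b ⊔ I := by
  obtain ⟨t, ht, c, hc, rfl⟩ := Submodule.mem_sup.mp (hIJ ▸ Submodule.mem_top (x := b))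
  have hcJ : rspan c ≤ J := rspan_le_iff.mpr hc
  have hcle : rspan c ≤ rspan (t + c) ⊔ I := rspan_le_iff.mpr <| by
    simpa using sub_mem (Submodule.mem_sup_left (mem_rspan_self (t + c)))
      (Submodule.mem_sup_right ht)
  rcases htri c with htop | huni | hts
  · exact absurd (top_le_iff.mp (htop ▸ hcJ)) hJ
  · rcases (isUniserialMod_quotient_iff _).mp huni (I ⊔ rspan c) J le_sup_right hcJ with hle | hle
    · exact absurd (top_le_iff.mp (hIJ ▸ sup_le (le_sup_left.trans hle) le_rfl)) hJ
    · have htop : rspan (t + c) ⊔ I = ⊤ :=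
        top_le_iff.mp (hIJ ▸ sup_le le_sup_right (hle.trans (sup_le le_sup_right hcle)))
      exact htop ▸ Submodule.mem_top
  · rw [mul_add]
    exact add_mem (Submodule.mem_sup_right (hI r t ht)) (hcle (hts r c (mem_rspan_self c)))

lemma isTwoSidedRid_of_iInf_le {n : ℕ} [Nontrivial (Fin n)] {A : Fin n → Submodule Rᵐᵒᵖ R}
    (htri : ∀ c : R,
      rspan c = ⊤ ∨ IsUniserialMod Rᵐᵒᵖ (R ⧸ rspan c) ∨ IsTwoSidedRid (rspan c))
    (hprop : ∀ i, A i ≠ ⊤) (hcomm : ∀ i j, rmul (A i) (A j) = rmul (A j) (A i))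
    (hco : Coindep A) {B : Submodule Rᵐᵒᵖ R} (hB : ⨅ i, A i ≤ B) : IsTwoSidedRid B := by
  have hts := hco.isTwoSidedRid hcomm
  refine fun r x hx => iInf_sup_le_of_iInf_le hts hco hB ((Submodule.mem_iInf _).mpr fun i => ?_)
  obtain ⟨j, hj⟩ := exists_ne i
  have hJ : (⨅ k, ⨅ (_ : k ≠ i), A k) ≠ ⊤ := fun h =>
    hprop j (top_le_iff.mp (h ▸ (iInf_le _ j).trans (iInf_le _ hj)))
  exact sup_le_sup_right (rspan_le_iff.mpr hx) _ (mul_mem_rspan_sup (hts i) hJ (hco i) htri r x)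

end PrincipalRightIdeals

theorem statement13_general {R : Type u} [Ring R] :
    (∀ A : Submodule Rᵐᵒᵖ R, A ≠ ⊥ → HasSerialFact A) ↔
      ∀ r : R, r ≠ 0 → HasSerialFact (rspan r) := by
  refine ⟨fun h r hr => h _ ((Submodule.ne_bot_iff _).mpr ⟨r, mem_rspan_self r, hr⟩),
    fun hyp B hB => ?_⟩
  obtain ⟨a, haB, ha⟩ := (Submodule.ne_bot_iff _).mp hB
  obtain ⟨n, A, hprop, hcomm, hco, huni, hA⟩ := hyp a ha
  have hle : ⨅ i, A i ≤ B := by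
    rw [← rprod_ofFn_eq_iInf hcomm hco, ← hA]
    exact rspan_le_iff.mpr haB
  obtain ⟨hBle, hcommB⟩ : ⨅ i, (B ⊔ A i) ≤ B ∧
      ∀ i j, rmul (B ⊔ A i) (B ⊔ A j) = rmul (B ⊔ A j) (B ⊔ A i) := by
    rcases subsingleton_or_nontrivial (Fin n) with _ | _
    · exact ⟨iInf_sup_le_of_subsingleton hle, fun i j => by rw [Subsingleton.elim i j]⟩
    · have hBts := isTwoSidedRid_of_iInf_le
        (rspan_eq_top_or_uniserial_or_isTwoSidedRid hyp) hprop hcomm hco hle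
      exact ⟨iInf_sup_le_of_iInf_le (hco.isTwoSidedRid hcomm) hco hle,
        hco.rmul_sup_comm hBts hcomm⟩
  rw [le_antisymm (le_iInf fun _ => le_sup_left) hBle]
  exact hasSerialFact_iInf hcommB (hco.mono fun _ => le_sup_right)
    fun i => isUniserialMod_quotient_of_le le_sup_right (huni i)

/-- Proposition 3.4: every non-zero right ideal of `R` has a serial factorization iff `rR`
has a serial factorization for every non-zero `r ∈ R`. -/
theorem statement13 {R : Type u} [Ring R] [Nontrivial R] :
    (∀ A : Submodule Rᵐᵒᵖ R, A ≠ ⊥ → HasSerialFact A) ↔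
      ∀ r : R, r ≠ 0 → HasSerialFact (rspan r) :=
  statement13_general
end

section
/- A commutative integral domain R has the property that every non-zero ideal of R has a serial factorization if and only if R is an h-local Prüfer domain, i.e., every non-zero element of R is contained in only finitely many maximal ideals of R, every non-zero prime ideal of R is contained in a unique maximal ideal of R, and for every maximal ideal M of R the localization R_M is a valuation domain. -/
universe u

/-- A finite family of ideals is coindependent if `Aᵢ + ⋂_{j ≠ i} Aⱼ = R` for every `i`. -/
def CoindepC {R : Type u} [CommRing R] {n : ℕ} (A : Fin n → Ideal R) : Prop :=
  ∀ i, A i ⊔ (⨅ j, ⨅ (_ : j ≠ i), A j) = ⊤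

/-- A serial factorization of an ideal `A` of a commutative ring `R`: a factorization
`A = A₁⋯Aₙ` into proper ideals forming a coindependent family with every `R/Aᵢ` a
uniserial `R`-module. -/
def IsSerialFactC {R : Type u} [CommRing R] {n : ℕ} (A : Ideal R) (F : Fin n → Ideal R) :
    Prop :=
  (∀ i, F i ≠ ⊤) ∧ CoindepC F ∧ (∀ i, IsUniserialMod R (R ⧸ F i)) ∧ A = ∏ i, F i

/-!
If `A = F₁⋯Fₙ` is a serial factorization, the ideals above each `Fᵢ` form a chain, so `Fᵢ` lies
in a single maximal ideal; this gives finite character, and h-locality because a prime ideal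
equals one of its factors. At a prime `M`, the factor inside `M` is multiplied into `A` by an
element outside `M`, so ideals containing `A` become a chain in `R_M`; applied to `A = BC` this
makes `R_M` a valuation ring.

Conversely, in an h-local Prüfer domain take `Fᵢ = A R_{Mᵢ} ∩ R` for the finitely many maximal
ideals `Mᵢ ⊇ A`. By h-locality `Mᵢ` is the only maximal ideal over `Fᵢ`, so the `Fᵢ` are pairwise
comaximal, every ideal above `Fᵢ` is the contraction of its extension to the valuation ring
`R_{Mᵢ}`, and `∏ Fᵢ = ⋂ Fᵢ = A` can be checked locally.
-/

open Ideal

section Uniserial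

variable {R : Type*} [CommRing R]

theorem isUniserialMod_quotient_iff_s17 {I : Ideal R} :
    IsUniserialMod R (R ⧸ I) ↔ ∀ B C : Ideal R, I ≤ B → I ≤ C → B ≤ C ∨ C ≤ B := by
  let e := Submodule.comapMkQRelIso I
  refine ⟨fun h B C hB hC => ?_, fun h N P => ?_⟩
  · exact (h (e.symm ⟨B, hB⟩) (e.symm ⟨C, hC⟩)).imp e.symm.le_iff_le.mp e.symm.le_iff_le.mp
  · exact (h (e N) (e P) (e N).2 (e P).2).imp e.le_iff_le.mp e.le_iff_le.mp

theorem IsUniserialMod.setOf_isMaximal_le_subsingleton {I : Ideal R}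
    (h : IsUniserialMod R (R ⧸ I)) : {M : Ideal R | M.IsMaximal ∧ I ≤ M}.Subsingleton := by
  rintro M ⟨hM, hIM⟩ N ⟨hN, hIN⟩
  rcases isUniserialMod_quotient_iff_s17.mp h M N hIM hIN with hle | hle
  · exact hM.eq_of_le hN.ne_top hle
  · exact (hN.eq_of_le hM.ne_top hle).symm

end Uniserial

section Coindependent

variable {R : Type*} [CommRing R] {n : ℕ} {F : Fin n → Ideal R}

theorem CoindepC.eq_of_le {M : Ideal R} (hF : CoindepC F) (hM : M ≠ ⊤) {i j : Fin n}
    (hi : F i ≤ M) (hj : F j ≤ M) : i = j := by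
  by_contra hij
  refine hM (top_le_iff.mp ((hF j).symm.trans_le (sup_le hj ?_)))
  exact (iInf₂_le i hij).trans hi

theorem coindepC_of_pairwise_isCoprime (h : Pairwise fun i j => IsCoprime (F i) (F j)) :
    CoindepC F := fun i => by
  simpa [isCoprime_iff_sup_eq] using
    isCoprime_biInf (s := Finset.univ.erase i) fun j hj => h (Finset.ne_of_mem_erase hj).symm

end Coindependent

namespace IsSerialFactC

variable {R : Type*} [CommRing R] {n : ℕ} {A : Ideal R} {F : Fin n → Ideal R}

theorem le_factor (hF : IsSerialFactC A F) (i : Fin n) : A ≤ F i :=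
  hF.2.2.2 ▸ prod_le_inf.trans (Finset.inf_le (Finset.mem_univ i))

theorem exists_factor_le {P : Ideal R} (hF : IsSerialFactC A F) (hP : P.IsPrime) (hAP : A ≤ P) :
    ∃ i, F i ≤ P := by
  obtain ⟨i, -, hi⟩ := hP.prod_le.mp (hF.2.2.2 ▸ hAP)
  exact ⟨i, hi⟩

theorem setOf_isMaximal_le_finite (hF : IsSerialFactC A F) :
    {M : Ideal R | M.IsMaximal ∧ A ≤ M}.Finite := by
  refine (Set.finite_iUnion fun i => (hF.2.2.1 i).setOf_isMaximal_le_subsingleton.finite).subset ?_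
  rintro M ⟨hM, hAM⟩
  obtain ⟨i, hi⟩ := hF.exists_factor_le hM.isPrime hAM
  exact Set.mem_iUnion.mpr ⟨i, hM, hi⟩

theorem existsUnique_isMaximal_le (hF : IsSerialFactC A F) (hA : A.IsPrime) :
    ∃! M : Ideal R, M.IsMaximal ∧ A ≤ M := by
  obtain ⟨i, hi⟩ := hF.exists_factor_le hA le_rfl
  have hAF : A = F i := le_antisymm (hF.le_factor i) hi
  obtain ⟨M, hM, hAM⟩ := exists_le_maximal A hA.ne_top
  exact ⟨M, ⟨hM, hAM⟩, fun N hN =>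
    (hF.2.2.1 i).setOf_isMaximal_le_subsingleton (hAF ▸ hN) (hAF ▸ ⟨hM, hAM⟩)⟩

theorem exists_span_singleton_mul_le (hF : IsSerialFactC A F) {M : Ideal R} (hM : M.IsPrime)
    {B C : Ideal R} (hB : A ≤ B) (hC : A ≤ C) :
    ∃ s ∉ M, span {s} * B ≤ C ∨ span {s} * C ≤ B := by
  by_cases hAM : A ≤ M
  swap
  · obtain ⟨s, hsA, hsM⟩ := SetLike.not_le_iff_exists.mp hAM
    refine ⟨s, hsM, Or.inl ?_⟩
    exact mul_le_left.trans ((span_singleton_le_iff_mem A).mpr hsA |>.trans hC)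
  obtain ⟨i, hi⟩ := hF.exists_factor_le hM hAM
  have hcompl : ¬ ∏ j ∈ Finset.univ.erase i, F j ≤ M := fun hle => by
    obtain ⟨j, hj, hjM⟩ := hM.prod_le.mp hle
    exact Finset.ne_of_mem_erase hj (hF.2.1.eq_of_le hM.ne_top hjM hi)
  obtain ⟨s, hs, hsM⟩ := SetLike.not_le_iff_exists.mp hcompl
  have hsF : span {s} * F i ≤ A := by
    rw [hF.2.2.2, ← Finset.prod_erase_mul _ _ (Finset.mem_univ i)]
    exact mul_mono_left ((span_singleton_le_iff_mem _).mpr hs)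
  have key : ∀ {B C : Ideal R}, A ≤ C → B ≤ C ⊔ F i → span {s} * B ≤ C := fun hC hBC =>
    calc span {s} * _ ≤ span {s} * (_ ⊔ F i) := mul_mono_right hBC
      _ = span {s} * _ ⊔ span {s} * F i := mul_sup _ _ _
      _ ≤ _ := sup_le mul_le_right (hsF.trans hC)
  refine ⟨s, hsM, ?_⟩
  rcases isUniserialMod_quotient_iff_s17.mp (hF.2.2.1 i) (B ⊔ F i) (C ⊔ F i) le_sup_right
    le_sup_right with hle | hle
  · exact Or.inl (key hC (le_sup_left.trans hle))
  · exact Or.inr (key hB (le_sup_left.trans hle))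

end IsSerialFactC

theorem valuationRing_localization_of_exists_span_singleton_mul_le {R : Type*} [CommRing R]
    [IsDomain R] (M : Ideal R) [M.IsPrime]
    (h : ∀ B C : Ideal R, ∃ s ∉ M, span {s} * B ≤ C ∨ span {s} * C ≤ B) :
    ValuationRing (Localization.AtPrime M) := by
  refine ValuationRing.iff_ideal_total.mpr ⟨fun I J => ?_⟩
  obtain ⟨s, hsM, hs⟩ := h (I.under R) (J.under R)
  have hunit : ∀ B : Ideal R,
      (span {s} * B).map (algebraMap R (Localization.AtPrime M)) = B.map (algebraMap R _) := by
    intro B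
    rw [Ideal.map_mul, Ideal.map_span, Set.image_singleton,
      span_singleton_eq_top.mpr (IsLocalization.map_units _ (⟨s, hsM⟩ : M.primeCompl)), top_mul]
  have hle : ∀ {I J : Ideal (Localization.AtPrime M)}, span {s} * I.under R ≤ J.under R → I ≤ J :=
    fun {I J} hIJ => calc
      I = (span {s} * I.under R).map (algebraMap R _) := by
        rw [hunit, IsLocalization.map_under M.primeCompl]
      _ ≤ (J.under R).map (algebraMap R _) := map_mono hIJ
      _ = J := IsLocalization.map_under M.primeCompl _ J
  exact hs.imp hle hle

section HLocal

variable {R : Type*} [CommRing R]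

theorem le_of_localization_maximal_of_le {I J : Ideal R}
    (h : ∀ (P : Ideal R) [P.IsMaximal], J ≤ P →
      I.map (algebraMap R (Localization.AtPrime P)) ≤ J.map (algebraMap R _)) :
    I ≤ J :=
  le_of_localization_maximal fun P hP => by
    by_cases hJP : J ≤ P
    · exact h P hJP
    · rw [IsLocalization.AtPrime.map_eq_top_of_not_le _ hJP]
      exact le_top

theorem under_map_localization_eq_self {B M : Ideal R} [M.IsMaximal]
    (h : ∀ N : Ideal R, N.IsMaximal → B ≤ N → N = M) :
    (B.map (algebraMap R (Localization.AtPrime M))).under R = B := by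
  refine le_antisymm (le_of_localization_maximal_of_le fun N _ hBN => ?_) le_comap_map
  obtain rfl := h N ‹_› hBN
  rw [IsLocalization.map_under N.primeCompl]

/-- A minimal prime over `A Rₘ ∩ R` is the contraction of a prime of `Rₘ`, hence a non-zero
prime inside `M`. -/
theorem eq_of_under_map_localization_le
    (hloc : ∀ P : Ideal R, P.IsPrime → P ≠ ⊥ → ∃! M : Ideal R, M.IsMaximal ∧ P ≤ M)
    {A : Ideal R} (hA : A ≠ ⊥) (M : Ideal R) [M.IsMaximal] {N : Ideal R} (hN : N.IsMaximal)
    (hle : (A.map (algebraMap R (Localization.AtPrime M))).under R ≤ N) : N = M := by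
  obtain ⟨P, hPmin, hPN⟩ := exists_minimalPrimes_le hle
  obtain ⟨Q, hQ, rfl⟩ := exists_minimalPrimes_comap_eq _ P hPmin
  have hQM : Q.under R ≤ M := by
    have := hQ.isPrime
    exact (comap_mono (IsLocalRing.le_maximalIdeal this.ne_top)).trans_eq
      Localization.AtPrime.under_maximalIdeal
  have hQ0 : Q.under R ≠ ⊥ := ne_bot_of_le_ne_bot hA (le_comap_map.trans hPmin.le)
  exact (hloc _ hPmin.isPrime hQ0).unique ⟨hN, hPN⟩ ⟨inferInstance, hQM⟩

theorem isUniserialMod_quotient_of_forall_isMaximal_eq [IsDomain R] {F M : Ideal R} [M.IsMaximal]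
    [ValuationRing (Localization.AtPrime M)] (h : ∀ N : Ideal R, N.IsMaximal → F ≤ N → N = M) :
    IsUniserialMod R (R ⧸ F) := by
  refine isUniserialMod_quotient_iff_s17.mpr fun B C hB hC => ?_
  have hsat : ∀ {B}, F ≤ B → (B.map (algebraMap R (Localization.AtPrime M))).under R = B :=
    fun hB => under_map_localization_eq_self fun N hN hBN => h N hN (hB.trans hBN)
  rw [← hsat hB, ← hsat hC]
  exact (ValuationRing.iff_ideal_total.mp inferInstance).total _ _ |>.imp comap_mono comap_mono

end HLocal

theorem exists_isSerialFactC_of_hLocal_of_valuationRing {R : Type*} [CommRing R] [IsDomain R]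
    (hloc : ∀ P : Ideal R, P.IsPrime → P ≠ ⊥ → ∃! M : Ideal R, M.IsMaximal ∧ P ≤ M)
    (hval : ∀ (M : Ideal R) [M.IsMaximal], ValuationRing (Localization.AtPrime M))
    {A : Ideal R} (hA : A ≠ ⊥) (hfin : {M : Ideal R | M.IsMaximal ∧ A ≤ M}.Finite) :
    ∃ (n : ℕ) (F : Fin n → Ideal R), IsSerialFactC A F := by
  obtain ⟨n, M, hM⟩ := hfin.fin_embedding
  have hMA : ∀ i, (M i).IsMaximal ∧ A ≤ M i := fun i => hM.subset (Set.mem_range_self i)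
  let F i := have := (hMA i).1; (A.map (algebraMap R (Localization.AtPrime (M i)))).under R
  have hFM : ∀ i N, N.IsMaximal → F i ≤ N → N = M i := fun i _ hN =>
    have := (hMA i).1; eq_of_under_map_localization_le hloc hA (M i) hN
  have hcop : Pairwise fun i j => IsCoprime (F i) (F j) := fun i j hij => by
    refine isCoprime_iff_sup_eq.mpr (by_contra fun hne => ?_)
    obtain ⟨N, hN, hle⟩ := exists_le_maximal _ hne
    exact hij (M.injective ((hFM i N hN (le_sup_left.trans hle)).symm.trans
      (hFM j N hN (le_sup_right.trans hle))))
  refine ⟨n, F, fun i => ?_, coindepC_of_pairwise_isCoprime hcop, fun i => ?_, ?_⟩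
  · have := (hMA i).1
    exact comap_ne_top _ ((IsLocalization.map_algebraMap_ne_top_iff_disjoint (M i).primeCompl
      _ A).mpr (Set.disjoint_left.mpr fun x hx hxA => hx ((hMA i).2 hxA)))
  · have := (hMA i).1
    exact isUniserialMod_quotient_of_forall_isMaximal_eq (hFM i)
  · rw [prod_eq_iInf_of_pairwise_isCoprime fun i _ j _ hij => hcop hij]
    refine le_antisymm (le_iInf₂ fun i _ => le_comap_map) (le_of_localization_maximal_of_le ?_)
    intro N _ hAN
    obtain ⟨i, rfl⟩ := hM.symm.subset ⟨‹_›, hAN⟩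
    calc (⨅ j ∈ Finset.univ, F j).map _ ≤ (F i).map _ := map_mono (iInf₂_le i (Finset.mem_univ i))
      _ = A.map _ := IsLocalization.map_under (M i).primeCompl _ _

/-- Proposition (h-local): a commutative integral domain `R` has the property that every
non-zero ideal has a serial factorization iff `R` is an h-local Prüfer domain: every non-zero
element lies in only finitely many maximal ideals, every non-zero prime ideal lies in a unique
maximal ideal, and the localization at every maximal ideal is a valuation domain. -/
theorem statement17 {R : Type u} [CommRing R] [IsDomain R] :
    (∀ A : Ideal R, A ≠ ⊥ → ∃ (n : ℕ) (F : Fin n → Ideal R), IsSerialFactC A F) ↔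
      ((∀ r : R, r ≠ 0 → {M : Ideal R | M.IsMaximal ∧ r ∈ M}.Finite) ∧
       (∀ P : Ideal R, P.IsPrime → P ≠ ⊥ → ∃! M : Ideal R, M.IsMaximal ∧ P ≤ M) ∧
       (∀ (M : Ideal R) (hM : M.IsMaximal),
         ValuationRing (Localization (@Ideal.primeCompl R _ M hM.isPrime)))) := by
  refine ⟨fun H => ⟨fun r hr => ?_, fun P hP hP0 => ?_, fun M hM => ?_⟩, ?_⟩
  · obtain ⟨n, F, hF⟩ := H _ (span_singleton_eq_bot.not.mpr hr)
    simpa only [span_singleton_le_iff_mem] using hF.setOf_isMaximal_le_finite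
  · obtain ⟨n, F, hF⟩ := H P hP0
    exact hF.existsUnique_isMaximal_le hP
  · refine valuationRing_localization_of_exists_span_singleton_mul_le M fun B C => ?_
    by_cases hBC : B * C = ⊥
    · refine ⟨1, (ne_top_iff_one M).mp hM.ne_top, ?_⟩
      rcases mul_eq_bot.mp hBC with rfl | rfl <;> simp
    · obtain ⟨n, F, hF⟩ := H _ hBC
      exact hF.exists_span_singleton_mul_le hM.isPrime mul_le_left mul_le_right
  · rintro ⟨hfin, hloc, hval⟩ A hA
    obtain ⟨a, haA, ha0⟩ := (Submodule.ne_bot_iff A).mp hA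
    exact exists_isSerialFactC_of_hLocal_of_valuationRing hloc (fun M _ => hval M ‹_›) hA
      ((hfin a ha0).subset fun M hM => ⟨hM.1, hM.2 haA⟩)
end

section
/- Let R be an integral domain (a not necessarily commutative ring with no non-zero zero divisors) and a a non-zero non-invertible element of R. Then: (1) if R/aR is a uniserial right R-module, then a is a rigid element of R; (2) if moreover R is a right Bézout domain, then R/aR is a uniserial right R-module if and only if a is a rigid element of R. -/
open MulOpposite

universe u

/-- An element of a (possibly noncommutative) integral domain is rigid if it is non-zero,
non-invertible, and whenever `a = xy' = yx'`, then `x = yu` or `y = xu` for some `u`. -/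
def IsRigid {R : Type u} [Ring R] (a : R) : Prop :=
  a ≠ 0 ∧ ¬IsUnit a ∧
    ∀ x y x' y' : R, a = x * y' → a = y * x' →
      (∃ u : R, x = y * u) ∨ (∃ u : R, y = x * u)

/-- A right Bézout domain: every finitely generated right ideal is principal. -/
def IsRightBezout (R : Type u) [Ring R] : Prop :=
  ∀ A : Submodule Rᵐᵒᵖ R, A.FG → ∃ a : R, A = rspan a

/-!
A principal right ideal `cR` contains `a` exactly when `c` divides `a` on the left, so rigidity of
`a` says that the principal right ideals containing `a` form a chain. The cyclic submodule of
`R/aR` generated by the class of `x` is the image of `xR + aR`; when `x` divides `a` this is just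
`xR`, so comparing cyclic submodules of `R/aR` generated by left divisors of `a` is comparing
principal right ideals containing `a`. Uniserial modules are those whose cyclic submodules are
comparable, and when `R` is right Bézout every `xR + aR` is principal, generated by a left divisor
of `a`.
-/

open Submodule

theorem isUniserialMod_of_span_singleton_total {S M : Type*} [Ring S] [AddCommGroup M]
    [Module S M] (h : ∀ m n : M, span S {m} ≤ span S {n} ∨ span S {n} ≤ span S {m}) :
    IsUniserialMod S M := by
  intro N P
  by_contra! hNP
  obtain ⟨m, hmN, hmP⟩ := SetLike.not_le_iff_exists.mp hNP.1
  obtain ⟨n, hnP, hnN⟩ := SetLike.not_le_iff_exists.mp hNP.2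
  rcases h m n with hmn | hnm
  · exact hmP ((hmn.trans ((span_singleton_le_iff_mem n P).mpr hnP)) (mem_span_singleton_self m))
  · exact hnN ((hnm.trans ((span_singleton_le_iff_mem m N).mpr hmN)) (mem_span_singleton_self n))

theorem span_mkQ_le_span_mkQ_iff {S M : Type*} [Ring S] [AddCommGroup M] [Module S M]
    (p : Submodule S M) (x y : M) :
    span S {p.mkQ x} ≤ span S {p.mkQ y} ↔ span S {x} ≤ span S {y} ⊔ p := by
  rw [← Set.image_singleton, ← Set.image_singleton, ← map_span, ← map_span,
    LinearMap.map_le_map_iff, ker_mkQ]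

section RightIdeals

variable {R : Type u} [Ring R]

theorem mem_rspan_iff {x y : R} : x ∈ rspan y ↔ ∃ u, x = y * u := by
  simp only [rspan, mem_span_singleton, eq_comm (a := x)]
  exact ⟨fun ⟨r, hr⟩ => ⟨r.unop, hr⟩, fun ⟨u, hu⟩ => ⟨op u, hu⟩⟩

theorem rspan_le_iff_mem {x : R} {A : Submodule Rᵐᵒᵖ R} : rspan x ≤ A ↔ x ∈ A :=
  span_singleton_le_iff_mem x A

theorem isRigid_iff_rspan_total {a : R} :
    IsRigid a ↔ a ≠ 0 ∧ ¬IsUnit a ∧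
      ∀ c d : R, a ∈ rspan c → a ∈ rspan d → rspan c ≤ rspan d ∨ rspan d ≤ rspan c := by
  simp only [IsRigid, rspan_le_iff_mem, mem_rspan_iff]
  refine and_congr_right fun _ => and_congr_right fun _ => ⟨?_, ?_⟩
  · rintro h c d ⟨c', hc⟩ ⟨d', hd⟩
    exact h c d d' c' hc hd
  · intro h x y x' y' hx hy
    exact h x y ⟨y', hx⟩ ⟨x', hy⟩

theorem span_mkQ_le_span_mkQ_iff_of_mem {a c d : R} (hd : a ∈ rspan d) :
    span Rᵐᵒᵖ {(rspan a).mkQ c} ≤ span Rᵐᵒᵖ {(rspan a).mkQ d} ↔ rspan c ≤ rspan d := by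
  rw [span_mkQ_le_span_mkQ_iff]
  change rspan c ≤ rspan d ⊔ rspan a ↔ _
  rw [sup_eq_left.mpr (rspan_le_iff_mem.mpr hd)]

theorem exists_span_mkQ_eq_of_isRightBezout (hR : IsRightBezout R) (a x : R) :
    ∃ c, a ∈ rspan c ∧ span Rᵐᵒᵖ {(rspan a).mkQ x} = span Rᵐᵒᵖ {(rspan a).mkQ c} := by
  obtain ⟨c, hc⟩ := hR (rspan x ⊔ rspan a) ((fg_span_singleton x).sup (fg_span_singleton a))
  have hac : a ∈ rspan c := hc ▸ mem_sup_right (mem_span_singleton_self a)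
  refine ⟨c, hac, le_antisymm ?_ ?_⟩
  · rw [span_mkQ_le_span_mkQ_iff_of_mem hac, ← hc]
    exact le_sup_left
  · rw [span_mkQ_le_span_mkQ_iff]
    change rspan c ≤ rspan x ⊔ rspan a
    exact hc.ge

theorem IsUniserialMod.isRigid {a : R} (ha : a ≠ 0) (hu : ¬IsUnit a)
    (hU : IsUniserialMod Rᵐᵒᵖ (R ⧸ rspan a)) : IsRigid a := by
  refine isRigid_iff_rspan_total.mpr ⟨ha, hu, fun c d hc hd => ?_⟩
  rw [← span_mkQ_le_span_mkQ_iff_of_mem hd, ← span_mkQ_le_span_mkQ_iff_of_mem hc]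
  exact hU _ _

theorem IsRigid.isUniserialMod {a : R} (hR : IsRightBezout R) (ha : IsRigid a) :
    IsUniserialMod Rᵐᵒᵖ (R ⧸ rspan a) := by
  refine isUniserialMod_of_span_singleton_total fun m n => ?_
  obtain ⟨x, rfl⟩ := (rspan a).mkQ_surjective m
  obtain ⟨y, rfl⟩ := (rspan a).mkQ_surjective n
  obtain ⟨c, hc, hxc⟩ := exists_span_mkQ_eq_of_isRightBezout hR a x
  obtain ⟨d, hd, hyd⟩ := exists_span_mkQ_eq_of_isRightBezout hR a y
  rw [hxc, hyd, span_mkQ_le_span_mkQ_iff_of_mem hd, span_mkQ_le_span_mkQ_iff_of_mem hc]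
  exact (isRigid_iff_rspan_total.mp ha).2.2 c d hc hd

end RightIdeals

theorem statement18_general {R : Type u} [Ring R]
    (a : R) (ha : a ≠ 0) (hu : ¬IsUnit a) :
    (IsUniserialMod Rᵐᵒᵖ (R ⧸ rspan a) → IsRigid a) ∧
    (IsRightBezout R → (IsUniserialMod Rᵐᵒᵖ (R ⧸ rspan a) ↔ IsRigid a)) :=
  ⟨IsUniserialMod.isRigid ha hu,
    fun hR => ⟨IsUniserialMod.isRigid ha hu, IsRigid.isUniserialMod hR⟩⟩

/-- Lemma (vhip): for a non-zero non-invertible element `a` of an integral domain `R`,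
(1) if `R/aR` is uniserial then `a` is rigid; (2) if moreover `R` is right Bézout, then
`R/aR` is uniserial iff `a` is rigid. -/
theorem statement18 {R : Type u} [Ring R] [IsDomain R]
    (a : R) (ha : a ≠ 0) (hu : ¬IsUnit a) :
    (IsUniserialMod Rᵐᵒᵖ (R ⧸ rspan a) → IsRigid a) ∧
    (IsRightBezout R → (IsUniserialMod Rᵐᵒᵖ (R ⧸ rspan a) ↔ IsRigid a)) :=
  statement18_general a ha hu
end
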